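/- For any Boolean network f and any binary configurations x, y ∈ 𝔹^n, if y is reachable from x under the most permissive semantics, then there exists a multivalued network F over values {0,1,2} which is a refinement of f and in which the configuration 2·y (each component doubled) is reachable from 2·x under the asynchronous multivalued semantics. -/

import Mathlib

inductive PState : Type
  | zero | up | down | one
deriving DecidableEq

def PState.ofBool : Bool → PState
  | false => .zero
  | true  => .one

def PState.isBool (p : PState) : Prop := p = .zero ∨ p = .one

abbrev BN (n : ℕ) := (Fin n → Bool) → Fin n → Bool

def gamma {n : ℕ} (x : Fin n → PState) : Set (Fin n → Bool) :=
  {b | ∀ i (v : Bool), x i = PState.ofBool v → b i = v}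

def mpStep {n : ℕ} (f : BN n) (x y : Fin n → PState) : Prop :=
  ∃ i : Fin n, x i ≠ y i ∧ (∀ j, j ≠ i → x j = y j) ∧
    ((y i = .up ∧ x i ≠ .one ∧ ∃ z ∈ gamma x, f z i = true) ∨
     (y i = .one ∧ x i = .up) ∨
     (y i = .down ∧ x i ≠ .zero ∧ ∃ z ∈ gamma x, f z i = false) ∨
     (y i = .zero ∧ x i = .down))

def mpReachP {n : ℕ} (f : BN n) : (Fin n → PState) → (Fin n → PState) → Prop :=
  Relation.ReflTransGen (mpStep f)

def embed {n : ℕ} (x : Fin n → Bool) : Fin n → PState := fun i => PState.ofBool (x i)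

def mpReach {n : ℕ} (f : BN n) (x : Fin n → Bool) : Set (Fin n → Bool) :=
  {y | mpReachP f (embed x) (embed y)}

def cubeSet {n : ℕ} (h : Fin n → Option Bool) : Set (Fin n → Bool) :=
  {z | ∀ i b, h i = some b → z i = b}

def smaller {n : ℕ} (h h' : Fin n → Option Bool) : Prop :=
  ∀ i b, h' i = some b → h i = some b

def kClosed {n : ℕ} (f : BN n) (K : Finset (Fin n)) (h : Fin n → Option Bool) : Prop :=
  ∀ z ∈ cubeSet h, ∀ i ∈ K, h i = none ∨ h i = some (f z i)

def closedBy {n : ℕ} (f : BN n) (h : Fin n → Option Bool) : Prop :=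
  ∀ z ∈ cubeSet h, f z ∈ cubeSet h

def smallestClosed {n : ℕ} (f : BN n) (x : Fin n → Bool) (h : Fin n → Option Bool) : Prop :=
  x ∈ cubeSet h ∧ closedBy f h ∧
    ∀ h', x ∈ cubeSet h' → closedBy f h' → smaller h h'

def minClosed {n : ℕ} (f : BN n) (h : Fin n → Option Bool) : Prop :=
  closedBy f h ∧ ∀ h', closedBy f h' → smaller h' h → h' = h

def faStep {n : ℕ} (f : BN n) (x y : Fin n → Bool) : Prop :=
  ∃ i : Fin n, x i ≠ y i ∧ (∀ j, j ≠ i → x j = y j) ∧ y i = f x i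

def aStep {n : ℕ} (f : BN n) (x y : Fin n → Bool) : Prop :=
  x ≠ y ∧ ∀ i, x i ≠ y i → y i = f x i

def mnStep {n m : ℕ} (F : (Fin n → Fin (m+1)) → Fin n → ℤ)
    (x y : Fin n → Fin (m+1)) : Prop :=
  x ≠ y ∧ ∀ i, x i ≠ y i → ((y i : ℤ) = (x i : ℤ) + F x i)

def beta {n m : ℕ} (x : Fin n → Fin (m+1)) : Set (Fin n → Bool) :=
  {b | ∀ i, ((x i : ℕ) = 0 → b i = false) ∧ ((x i : ℕ) = m → b i = true)}

def refines {n m : ℕ} (F : (Fin n → Fin (m+1)) → Fin n → ℤ) (f : BN n) : Prop :=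
  ∀ x i, (F x i > 0 → ∃ b ∈ beta x, f b i = true) ∧
         (F x i < 0 → ∃ b ∈ beta x, f b i = false)

def alpha {n m : ℕ} (x : Fin n → Fin (m+1)) : Set (Fin n → PState) :=
  {p | ∀ i, ((x i : ℕ) = 0 ↔ p i = .zero) ∧ ((x i : ℕ) = m ↔ p i = .one)}

def bdStep {n : ℕ} (f : BN n) (L : Finset (Fin n)) (a b : Fin n → PState) : Prop :=
  mpStep f a b ∧ ∃ j, a j ≠ b j ∧ j ∉ L ∧ (a j).isBool ∧ ¬ (b j).isBool

def exhaustive {n : ℕ} (f : BN n) (x : Fin n → Bool) (L : Finset (Fin n))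
    (zhat : Fin n → PState) : Prop :=
  Relation.ReflTransGen (bdStep f L) (embed x) zhat ∧ ∀ z', ¬ bdStep f L zhat z'

def double {n : ℕ} (x : Fin n → Bool) : Fin n → Fin 3 :=
  fun i => if x i then (2 : Fin 3) else (0 : Fin 3)

/- Follow a most permissive trajectory from x to y, and let E be the set of components that have
left their Boolean value so far. The configuration that is 1 on E and 2·x elsewhere has among its
binarizations every Boolean state the trajectory can observe, so a component entering E moves from
0 or 2 to 1 by a step some binarization supports; at the end each component of E moves from 1 to
2·y_i, supported by the witness of its last transition. A refinement realising any such chain of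
supported steps is built backwards, redefining F only at the new first configuration, which is
harmless unless the target is already F-reachable from it. -/

section Refinement

variable {n m : ℕ}

def AdmissibleStep (f : BN n) (z w : Fin n → Fin (m + 1)) : Prop :=
  z ≠ w ∧ ∀ i, z i ≠ w i →
    ((w i : ℤ) = z i + 1 ∧ ∃ b ∈ beta z, f b i = true) ∨
    ((w i : ℤ) = z i - 1 ∧ ∃ b ∈ beta z, f b i = false)

lemma AdmissibleStep.refines_update {f : BN n} {z w : Fin n → Fin (m + 1)}
    (hzw : AdmissibleStep f z w) {F : (Fin n → Fin (m + 1)) → Fin n → ℤ} (hF : refines F f) :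
    refines (Function.update F z fun i => (w i : ℤ) - z i) f := by
  intro z' i
  rcases eq_or_ne z' z with rfl | hz'
  · rw [Function.update_self]
    by_cases hi : z' i = w i
    · simp [hi]
    · rcases hzw.2 i hi with ⟨hw, hb⟩ | ⟨hw, hb⟩
      · exact ⟨fun _ => hb, fun _ => by omega⟩
      · exact ⟨fun _ => by omega, fun _ => hb⟩
  · rw [Function.update_of_ne hz']
    exact hF z' i

lemma AdmissibleStep.update_eq_neg_one_or_zero_or_one {f : BN n} {z w : Fin n → Fin (m + 1)}
    (hzw : AdmissibleStep f z w) {F : (Fin n → Fin (m + 1)) → Fin n → ℤ}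
    (hF : ∀ z i, F z i = -1 ∨ F z i = 0 ∨ F z i = 1) (z' : Fin n → Fin (m + 1)) (i : Fin n) :
    Function.update F z (fun i => (w i : ℤ) - z i) z' i = -1 ∨
      Function.update F z (fun i => (w i : ℤ) - z i) z' i = 0 ∨
      Function.update F z (fun i => (w i : ℤ) - z i) z' i = 1 := by
  rcases eq_or_ne z' z with rfl | hz'
  · simp only [Function.update_self]
    by_cases hi : z' i = w i
    · simp [hi]
    · rcases hzw.2 i hi with ⟨hw, -⟩ | ⟨hw, -⟩ <;> omega
  · simp only [Function.update_of_ne hz']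
    exact hF z' i

lemma reflTransGen_mnStep_update {F : (Fin n → Fin (m + 1)) → Fin n → ℤ}
    {a b c : Fin n → Fin (m + 1)} (g : Fin n → ℤ) (hab : Relation.ReflTransGen (mnStep F) a b)
    (hcb : ¬ Relation.ReflTransGen (mnStep F) c b) :
    Relation.ReflTransGen (mnStep (Function.update F c g)) a b := by
  induction hab using Relation.ReflTransGen.head_induction_on with
  | refl => rfl
  | @head a a' hstep hrest ih =>
    refine .head ?_ ih
    have hac : a ≠ c := by rintro rfl; exact hcb (.head hstep hrest)
    simpa only [mnStep, Function.update_of_ne hac] using hstep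

theorem exists_refinement_of_reflTransGen {f : BN n} {z w : Fin n → Fin (m + 1)}
    (h : Relation.ReflTransGen (AdmissibleStep f) z w) :
    ∃ F : (Fin n → Fin (m + 1)) → Fin n → ℤ,
      (∀ z i, F z i = -1 ∨ F z i = 0 ∨ F z i = 1) ∧ refines F f ∧
      Relation.ReflTransGen (mnStep F) z w := by
  induction h using Relation.ReflTransGen.head_induction_on with
  | refl => exact ⟨0, fun _ _ => Or.inr (Or.inl rfl), fun _ _ => by simp, .refl⟩
  | @head z z₁ hstep _ ih =>
    obtain ⟨F, hunit, hF, hreach⟩ := ih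
    by_cases hz : Relation.ReflTransGen (mnStep F) z w
    · exact ⟨F, hunit, hF, hz⟩
    refine ⟨_, hstep.update_eq_neg_one_or_zero_or_one hunit, hstep.refines_update hF,
      .head (b := z₁) ?_ ?_⟩
    · refine ⟨hstep.1, fun i _ => ?_⟩
      rw [Function.update_self]
      ring
    · exact reflTransGen_mnStep_update _ hreach hz

end Refinement

-- The Boolean value a component holds, or is moving towards.
def PState.target : PState → Bool
  | .zero => false
  | .up => true
  | .down => false
  | .one => true

@[simp]
lemma PState.target_ofBool (b : Bool) : (PState.ofBool b).target = b := by
  cases b <;> rfl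

lemma PState.ofBool_injective : Function.Injective PState.ofBool := by
  intro a b h
  simpa using congrArg PState.target h

-- Either component i starts moving, towards a value supported by γ(q), or it completes its move.
lemma mpStep_cases {n : ℕ} {f : BN n} {q q' : Fin n → PState} (h : mpStep f q q') :
    ∃ i, (∀ j, j ≠ i → q j = q' j) ∧
      ((∃ b ∈ gamma q, f b i = (q' i).target) ∧ q i ≠ .ofBool (q' i).target ∨
        (q' i).target = (q i).target ∧ ∀ c, q i ≠ .ofBool c) := by
  obtain ⟨i, -, hother, hup | hone | hdown | hzero⟩ := h
  · obtain ⟨hi', hi, hb⟩ := hup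
    exact ⟨i, hother, .inl ⟨by simpa [hi', PState.target] using hb,
      by simpa [hi', PState.target, PState.ofBool] using hi⟩⟩
  · obtain ⟨hi', hi⟩ := hone
    exact ⟨i, hother, .inr ⟨by simp [hi, hi', PState.target], by
      rintro (_ | _) <;> simp [hi, PState.ofBool]⟩⟩
  · obtain ⟨hi', hi, hb⟩ := hdown
    exact ⟨i, hother, .inl ⟨by simpa [hi', PState.target] using hb,
      by simpa [hi', PState.target, PState.ofBool] using hi⟩⟩
  · obtain ⟨hi', hi⟩ := hzero
    exact ⟨i, hother, .inr ⟨by simp [hi, hi', PState.target], by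
      rintro (_ | _) <;> simp [hi, PState.ofBool]⟩⟩

section Doubling

variable {n : ℕ}

def doubleMid (x : Fin n → Bool) (E : Finset (Fin n)) : Fin n → Fin 3 :=
  fun i => if i ∈ E then 1 else double x i

lemma doubleMid_empty (x : Fin n → Bool) : doubleMid x ∅ = double x := by
  funext i
  simp [doubleMid]

variable {x : Fin n → Bool} {E : Finset (Fin n)}

lemma doubleMid_of_notMem {i : Fin n} (hi : i ∉ E) :
    doubleMid x E i = double x i := if_neg hi

lemma val_doubleMid_eq_zero {i : Fin n} :
    (doubleMid x E i : ℕ) = 0 ↔ i ∉ E ∧ x i = false := by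
  unfold doubleMid double
  split_ifs <;> simp_all

lemma val_doubleMid_eq_two {i : Fin n} :
    (doubleMid x E i : ℕ) = 2 ↔ i ∉ E ∧ x i = true := by
  unfold doubleMid double
  split_ifs <;> simp_all

lemma gamma_subset_beta_doubleMid {q : Fin n → PState}
    (hq : ∀ i ∉ E, q i = .ofBool (x i)) : gamma q ⊆ beta (m := 2) (doubleMid x E) := by
  intro b hb i
  constructor
  · intro h
    obtain ⟨hi, hx⟩ := val_doubleMid_eq_zero.1 h
    exact hb i false (by rw [hq i hi, hx])
  · intro h
    obtain ⟨hi, hx⟩ := val_doubleMid_eq_two.1 h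
    exact hb i true (by rw [hq i hi, hx])

lemma beta_doubleMid_mono {E' : Finset (Fin n)} (hE : E ⊆ E') :
    beta (m := 2) (doubleMid x E) ⊆ beta (m := 2) (doubleMid x E') := by
  intro b hb i
  constructor
  · intro h
    obtain ⟨hi, hx⟩ := val_doubleMid_eq_zero.1 h
    exact (hb i).1 (val_doubleMid_eq_zero.2 ⟨fun h => hi (hE h), hx⟩)
  · intro h
    obtain ⟨hi, hx⟩ := val_doubleMid_eq_two.1 h
    exact (hb i).2 (val_doubleMid_eq_two.2 ⟨fun h => hi (hE h), hx⟩)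

lemma admissibleStep_doubleMid_insert {f : BN n} {i : Fin n} (hi : i ∉ E)
    {b : Fin n → Bool} (hb : b ∈ beta (m := 2) (doubleMid x E)) (hfb : f b i = !x i) :
    AdmissibleStep f (doubleMid x E) (doubleMid x (insert i E)) := by
  have hmove : doubleMid x E i ≠ doubleMid x (insert i E) i := by
    simp only [doubleMid, hi, Finset.mem_insert_self, if_true, if_false, double]
    split_ifs <;> decide
  refine ⟨fun h => hmove (congrFun h i), fun j hj => ?_⟩
  obtain rfl : j = i := by
    by_contra hji
    simp [doubleMid, hji] at hj
  simp only [doubleMid, hi, Finset.mem_insert_self, if_true, if_false, double]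
  cases hx : x j
  · exact .inl ⟨rfl, b, hb, by simpa [hx] using hfb⟩
  · exact .inr ⟨rfl, b, hb, by simpa [hx] using hfb⟩

lemma admissibleStep_doubleMid_double {f : BN n} {y : Fin n → Bool}
    (hne : doubleMid x E ≠ double y) (hout : ∀ i ∉ E, x i = y i)
    (hwit : ∀ i ∈ E, ∃ b ∈ beta (m := 2) (doubleMid x E), f b i = y i) :
    AdmissibleStep f (doubleMid x E) (double y) := by
  refine ⟨hne, fun i hi => ?_⟩
  have hiE : i ∈ E := by
    by_contra hiE
    exact hi (by rw [doubleMid_of_notMem hiE, double, double, hout i hiE])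
  obtain ⟨b, hb, hfb⟩ := hwit i hiE
  simp only [doubleMid, hiE, if_true, double]
  cases hy : y i
  · exact .inr ⟨rfl, b, hb, by rw [hfb, hy]⟩
  · exact .inl ⟨rfl, b, hb, by rw [hfb, hy]⟩

end Doubling

structure Tracks {n : ℕ} (f : BN n) (x : Fin n → Bool) (q : Fin n → PState)
    (E : Finset (Fin n)) : Prop where
  eq_of_notMem : ∀ i ∉ E, q i = .ofBool (x i)
  witness : ∀ i ∈ E, ∃ b ∈ beta (m := 2) (doubleMid x E), f b i = (q i).target
  reach : Relation.ReflTransGen (AdmissibleStep f) (double x) (doubleMid x E)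

section Tracking

variable {n : ℕ} {f : BN n} {x : Fin n → Bool} {q q' : Fin n → PState} {E : Finset (Fin n)}

lemma tracks_embed : Tracks f x (embed x) ∅ where
  eq_of_notMem _ _ := rfl
  witness _ hi := absurd hi (Finset.notMem_empty _)
  reach := by rw [doubleMid_empty]

lemma Tracks.insert {i : Fin n}
    (hq : Tracks f x q E) (hother : ∀ j, j ≠ i → q j = q' j) {b : Fin n → Bool}
    (hb : b ∈ gamma q) (hfb : f b i = (q' i).target) (hi : q i ≠ .ofBool (q' i).target) :
    Tracks f x q' (insert i E) where
  eq_of_notMem j hj := by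
    rw [Finset.mem_insert, not_or] at hj
    rw [← hother j hj.1, hq.eq_of_notMem j hj.2]
  witness j hj := by
    have hmono := beta_doubleMid_mono (x := x) (Finset.subset_insert i E)
    by_cases hji : j = i
    · subst hji
      exact ⟨b, hmono (gamma_subset_beta_doubleMid hq.eq_of_notMem hb), hfb⟩
    · obtain ⟨b', hb', hfb'⟩ := hq.witness j ((Finset.mem_insert.1 hj).resolve_left hji)
      exact ⟨b', hmono hb', by rw [hfb', hother j hji]⟩
  reach := by
    by_cases hiE : i ∈ E
    · rw [Finset.insert_eq_of_mem hiE]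
      exact hq.reach
    have hx : (q' i).target = !x i := by
      rw [hq.eq_of_notMem i hiE] at hi
      cases hx : x i <;> cases ht : (q' i).target <;> simp_all
    exact hq.reach.tail (admissibleStep_doubleMid_insert hiE
      (gamma_subset_beta_doubleMid hq.eq_of_notMem hb) (hfb.trans hx))

lemma Tracks.settle {i : Fin n}
    (hq : Tracks f x q E) (hother : ∀ j, j ≠ i → q j = q' j)
    (htarget : (q' i).target = (q i).target) (hi : ∀ c, q i ≠ .ofBool c) :
    Tracks f x q' E := by
  have hiE : i ∈ E := by
    by_contra hiE
    exact hi _ (hq.eq_of_notMem i hiE)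
  have htarget' : ∀ j, (q' j).target = (q j).target := by
    intro j
    by_cases hji : j = i
    · rw [hji, htarget]
    · rw [hother j hji]
  refine ⟨fun j hj => ?_, fun j hj => ?_, hq.reach⟩
  · rw [← hother j (ne_of_mem_of_not_mem hiE hj).symm, hq.eq_of_notMem j hj]
  · simpa only [htarget'] using hq.witness j hj

lemma tracks_of_mpReachP (h : mpReachP f (embed x) q) :
    ∃ E, Tracks f x q E := by
  induction h with
  | refl => exact ⟨∅, tracks_embed⟩
  | tail _ hstep ih =>
    obtain ⟨E, hq⟩ := ih
    obtain ⟨i, hother, ⟨⟨b, hb, hfb⟩, hi⟩ | ⟨htarget, hi⟩⟩ := mpStep_cases hstep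
    · exact ⟨_, hq.insert hother hb hfb hi⟩
    · exact ⟨E, hq.settle hother htarget hi⟩

lemma Tracks.reflTransGen_double {y : Fin n → Bool}
    (hy : Tracks f x (embed y) E) :
    Relation.ReflTransGen (AdmissibleStep f) (double x) (double y) := by
  by_cases hne : doubleMid x E = double y
  · exact hne ▸ hy.reach
  refine hy.reach.tail (admissibleStep_doubleMid_double hne (fun i hi => ?_) fun i hi => ?_)
  · exact (PState.ofBool_injective (hy.eq_of_notMem i hi)).symm
  · simpa [embed] using hy.witness i hi

end Tracking

theorem stmt10 {n : ℕ} (f : BN n) (x y : Fin n → Bool)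
    (h : y ∈ mpReach f x) :
    ∃ F : (Fin n → Fin 3) → Fin n → ℤ,
      (∀ z i, F z i = -1 ∨ F z i = 0 ∨ F z i = 1) ∧
      refines (m := 2) F f ∧
      Relation.ReflTransGen (mnStep F) (double x) (double y) := by
  obtain ⟨E, hE⟩ := tracks_of_mpReachP h
  exact exists_refinement_of_reflTransGen hE.reflTransGen_double
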